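/- arXiv:1611.00981 — 2 statements merged into one kernel-verified Lean document; each statement's English description precedes it below -/
import Mathlib

section
/- Let k_1 ≥ k_2 ≥ k_m ≥ 3 be integers with at most one of k_1, k_2, k_m odd, and let n_1 ≥ k_1 and n_2 ≥ k_2. Then [n_1, k_1+k_m, k_m] + [n_2, k_2+k_m, k_m] < [n_1+n_2, k_1+k_2+k_m, k_m]. -/
/-!
Put `a = k_m - 1` and `n_i = k_i + x_i`. Unfolding the definition,
`[k + x, k + k_m, k_m] = C(k,2) + k·min(x,a) + cliquePackingEdges a x`, the last term
counting the edges of `x` vertices packed greedily into cliques of size `a`. The packing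
count is superadditive (two leftover cliques of sizes `r₁, r₂ ≤ a` are beaten by one of size
`min(r₁+r₂, a)` plus the rest), `min(·, a)` is monotone, and
`C(k₁+k₂,2) = C(k₁,2) + C(k₂,2) + k₁k₂` with `k₁k₂ > 0` supplies the strict gain.
-/

open SimpleGraph Finset

/-- The quantity `[n,m,l]` from the paper: if `n ≤ m-1` it is `C(n,2)`; otherwise, writing
`n = (m-1) + t(l-1) + r` with `0 ≤ r < l-1`, it is `C(m-1,2) + t·C(l-1,2) + C(r,2)`. -/
def brkt3 (n m l : ℕ) : ℕ :=
  if n ≤ m - 1 then Nat.choose n 2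
  else Nat.choose (m - 1) 2 + ((n - (m - 1)) / (l - 1)) * Nat.choose (l - 1) 2
      + Nat.choose ((n - (m - 1)) % (l - 1)) 2

/-- The quantity `[n,m]` from the paper: `C(⌊m/2⌋-1,2) + ⌊(m-2)/2⌋·(n - ⌊m/2⌋ + 1)`. -/
def brkt2 (n m : ℕ) : ℕ :=
  Nat.choose (m / 2 - 1) 2 + ((m - 2) / 2) * (n - m / 2 + 1)

/-- The disjoint union of paths `P_{k 0} ∪ … ∪ P_{k (m-1)}`. -/
def pathUnion (m : ℕ) (k : Fin m → ℕ) : SimpleGraph (Σ i : Fin m, Fin (k i)) where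
  Adj x y := x.1 = y.1 ∧ ((x.2 : ℕ) + 1 = (y.2 : ℕ) ∨ (y.2 : ℕ) + 1 = (x.2 : ℕ))
  symm := by constructor; rintro x y ⟨h1, h2⟩; exact ⟨h1.symm, h2.symm⟩
  loopless := by constructor; rintro x ⟨-, h⟩; omega

/-- `G` contains a copy of `H` as a subgraph. -/
def ContainsSub {V W : Type*} (G : SimpleGraph V) (H : SimpleGraph W) : Prop :=
  ∃ f : W ↪ V, ∀ a b, H.Adj a b → G.Adj (f a) (f b)

/-- The Turán number `ex(n,H)`: the maximum number of edges of a simple graph on `n`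
vertices containing no subgraph isomorphic to `H`. -/
noncomputable def exNum (n : ℕ) {W : Type*} (H : SimpleGraph W) : ℕ :=
  sSup {e : ℕ | ∃ G : SimpleGraph (Fin n), ¬ ContainsSub G H ∧ G.edgeSet.ncard = e}

/-- The connected Turán number `ex_con(n,H)`: the maximum number of edges of a connected
simple graph on `n` vertices containing no subgraph isomorphic to `H`. -/
noncomputable def exConNum (n : ℕ) {W : Type*} (H : SimpleGraph W) : ℕ :=
  sSup {e : ℕ | ∃ G : SimpleGraph (Fin n),
    G.Connected ∧ ¬ ContainsSub G H ∧ G.edgeSet.ncard = e}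

/-- The graph `K_m ∪ M_{n-m}` on `Fin n`: a complete graph on the first `m` vertices
together with a maximum matching on the remaining `n - m` vertices. -/
def compPlusMatching (n m : ℕ) : SimpleGraph (Fin n) where
  Adj a b := a ≠ b ∧
    (((a : ℕ) < m ∧ (b : ℕ) < m) ∨
     (m ≤ (a : ℕ) ∧ m ≤ (b : ℕ) ∧ ((a : ℕ) - m) / 2 = ((b : ℕ) - m) / 2))
  symm := by constructor; rintro a b ⟨h1, h2⟩; exact ⟨h1.symm, by tauto⟩
  loopless := by constructor; rintro a ⟨h, -⟩; exact h rfl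

/-- The graph `K_l + (K_2 ∪ K̄_{n-l-2})` on `Fin n`. -/
def joinK2Empty (n l : ℕ) : SimpleGraph (Fin n) where
  Adj a b := a ≠ b ∧ ((a : ℕ) < l ∨ (b : ℕ) < l ∨ ((a : ℕ) < l + 2 ∧ (b : ℕ) < l + 2))
  symm := by constructor; rintro a b ⟨h1, h2⟩; exact ⟨h1.symm, by tauto⟩
  loopless := by constructor; rintro a ⟨h, -⟩; exact h rfl

theorem Nat.add_choose_two (m n : ℕ) : (m + n).choose 2 = m.choose 2 + n.choose 2 + m * n := by
  simp [Nat.add_choose_eq, Finset.Nat.antidiagonal_succ]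
  ring

def cliquePackingEdges (a s : ℕ) : ℕ := s / a * a.choose 2 + (s % a).choose 2

theorem cliquePackingEdges_of_le {a s : ℕ} (hs : s ≤ a) :
    cliquePackingEdges a s = s.choose 2 := by
  rcases hs.lt_or_eq with hs | rfl
  · simp [cliquePackingEdges, Nat.div_eq_of_lt hs, Nat.mod_eq_of_lt hs]
  · rcases s.eq_zero_or_pos with rfl | hs
    · rfl
    · simp [cliquePackingEdges, Nat.div_self hs]

theorem cliquePackingEdges_add_mul {a : ℕ} (ha : 0 < a) (s q : ℕ) :
    cliquePackingEdges a (s + q * a) = cliquePackingEdges a s + q * a.choose 2 := by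
  simp only [cliquePackingEdges, Nat.add_mul_div_right _ _ ha, Nat.add_mul_mod_self_right]
  ring

theorem cliquePackingEdges_eq_choose_min_add {a : ℕ} (ha : 0 < a) (s : ℕ) :
    cliquePackingEdges a s = (min s a).choose 2 + cliquePackingEdges a (s - a) := by
  rcases le_total s a with hs | hs
  · rw [cliquePackingEdges_of_le hs, min_eq_left hs, Nat.sub_eq_zero_of_le hs]
    simp [cliquePackingEdges]
  · have := cliquePackingEdges_add_mul ha (s - a) 1
    rw [one_mul, Nat.sub_add_cancel hs] at this
    rw [this, min_eq_right hs]
    ring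

theorem choose_two_add_choose_two_le_cliquePackingEdges {a r₁ r₂ : ℕ} (ha : 0 < a)
    (h₁ : r₁ ≤ a) (h₂ : r₂ ≤ a) :
    r₁.choose 2 + r₂.choose 2 ≤ cliquePackingEdges a (r₁ + r₂) := by
  rw [cliquePackingEdges_eq_choose_min_add ha, cliquePackingEdges_of_le (by omega)]
  rcases le_total (r₁ + r₂) a with h | h
  · simp [min_eq_left h, Nat.sub_eq_zero_of_le h, Nat.add_choose_two]
  -- Split `r₁ = t + u`, `r₂ = t + v` with `a = t + u + v`: the two sides then differ by `u * v`.
  obtain ⟨t, u, v, rfl, rfl, rfl⟩ : ∃ t u v, r₁ = t + u ∧ r₂ = t + v ∧ a = t + u + v :=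
    ⟨r₁ + r₂ - a, a - r₂, a - r₁, by omega, by omega, by omega⟩
  rw [min_eq_right h, show t + u + (t + v) - (t + u + v) = t by omega]
  simp only [Nat.add_choose_two]
  linarith [Nat.zero_le (u * v)]

theorem cliquePackingEdges_add_le {a : ℕ} (ha : 0 < a) (s t : ℕ) :
    cliquePackingEdges a s + cliquePackingEdges a t ≤ cliquePackingEdges a (s + t) := by
  have hst : s + t = (s % a + t % a) + (s / a + t / a) * a := by
    have := Nat.mod_add_div' s a; have := Nat.mod_add_div' t a; rw [add_mul]; omega
  have hrem := choose_two_add_choose_two_le_cliquePackingEdges ha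
    (Nat.mod_lt s ha).le (Nat.mod_lt t ha).le
  rw [hst, cliquePackingEdges_add_mul ha]
  unfold cliquePackingEdges at hrem ⊢
  linarith

theorem brkt3_eq_choose_min_add (n m l : ℕ) :
    brkt3 n m l = (min n (m - 1)).choose 2 + cliquePackingEdges (l - 1) (n - (m - 1)) := by
  unfold brkt3 cliquePackingEdges
  split_ifs with h
  · simp [min_eq_left h, Nat.sub_eq_zero_of_le h]
  · rw [min_eq_right (by omega)]
    ring

theorem brkt3_add_add {l : ℕ} (hl : 2 ≤ l) (k x : ℕ) :
    brkt3 (k + x) (k + l) l =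
      k.choose 2 + k * min x (l - 1) + cliquePackingEdges (l - 1) x := by
  rw [brkt3_eq_choose_min_add, cliquePackingEdges_eq_choose_min_add (a := l - 1) (by omega) x,
    show k + l - 1 = k + (l - 1) by omega, Nat.add_sub_add_left, Nat.add_min_add_left,
    Nat.add_choose_two]
  ring

theorem statement15_general (k1 k2 km n1 n2 : ℕ) (h12 : k2 ≤ k1) (h2m : km ≤ k2) (h3 : 3 ≤ km)
    (hn1 : k1 ≤ n1) (hn2 : k2 ≤ n2) :
    brkt3 n1 (k1 + km) km + brkt3 n2 (k2 + km) km <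
      brkt3 (n1 + n2) (k1 + k2 + km) km := by
  obtain ⟨x1, rfl⟩ := Nat.exists_eq_add_of_le hn1
  obtain ⟨x2, rfl⟩ := Nat.exists_eq_add_of_le hn2
  rw [show k1 + x1 + (k2 + x2) = (k1 + k2) + (x1 + x2) by ring, brkt3_add_add (by omega),
    brkt3_add_add (by omega), brkt3_add_add (by omega), Nat.add_choose_two]
  have hpack := cliquePackingEdges_add_le (a := km - 1) (by omega) x1 x2
  have hmin₁ : k1 * min x1 (km - 1) ≤ k1 * min (x1 + x2) (km - 1) := by gcongr; omega
  have hmin₂ : k2 * min x2 (km - 1) ≤ k2 * min (x1 + x2) (km - 1) := by gcongr; omega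
  have hk : 0 < k1 * k2 := Nat.mul_pos (by omega) (by omega)
  rw [add_mul]
  omega

theorem statement15 (k1 k2 km n1 n2 : ℕ) (h12 : k2 ≤ k1) (h2m : km ≤ k2) (h3 : 3 ≤ km)
    (hodd : (if Odd k1 then 1 else 0) + (if Odd k2 then 1 else 0) +
        (if Odd km then 1 else 0) ≤ 1)
    (hn1 : k1 ≤ n1) (hn2 : k2 ≤ n2) :
    brkt3 n1 (k1 + km) km + brkt3 n2 (k2 + km) km <
      brkt3 (n1 + n2) (k1 + k2 + km) km :=
  statement15_general k1 k2 km n1 n2 h12 h2m h3 hn1 hn2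
end

section
/- Let k_1 ≥ k_2 ≥ k_m ≥ 3 be integers with at most one of k_1, k_2, k_m odd, and let n_1 ≥ k_1 and n_2 ≥ k_2 + k_m. Then [n_1, k_1+k_m, k_m] + [n_2, k_2+k_m] < max{ [n_1+n_2, k_1+k_2+k_m, k_m], [n_1+n_2, k_1+k_2+k_m] }. -/
open SimpleGraph Finset

/-!
Both brackets are quadratic polynomials up to a bounded error. For `n ≥ m - 1`, `2[n,m,l]` lies
between `(m-1)(m-2) + (n-m+1)(l-2) - (l-2)^2` and `(m-1)(m-2) + (n-m+1)(l-2)`, and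
`8[n,m] = (τ-2)(4n-τ)` with `τ = 2⌊m/2⌋ ∈ {m-1, m}` lies between `(m-3)(4n-m+1)` and
`(m-2)(4n-m)`. Bounding each bracket in the unfavourable direction leaves polynomial
inequalities. For `n₂ ≤ 2k₁ + k_m` the first term of the maximum wins; beyond that the second
one does, its lead growing linearly in `n₁ - k₁` and in `n₂ - (2k₁ + k_m + 1)`.
-/

lemma two_mul_choose_two_eq (n : ℕ) : 2 * (n.choose 2 : ℤ) = n * (n - 1) := by
  have h := Nat.cast_choose_two ℚ n
  exact_mod_cast (by rw [h]; ring : (2 * (n.choose 2 : ℚ)) = n * (n - 1))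

lemma two_mul_brkt3_eq_of_lt {n m l : ℕ} (hl : 2 ≤ l) (hm : 1 ≤ m) (h : m - 1 < n) :
    ∃ q r : ℕ, r < l - 1 ∧ (n : ℤ) - (m - 1) = q * (l - 1) + r ∧
      2 * (brkt3 n m l : ℤ) = (m - 1) * (m - 2) + q * (l - 1) * (l - 2) + r * (r - 1) := by
  rw [brkt3, if_neg (by omega)]
  have hdm := Nat.div_add_mod' (n - (m - 1)) (l - 1)
  have hr := Nat.mod_lt (n - (m - 1)) (show 0 < l - 1 by omega)
  generalize (n - (m - 1)) / (l - 1) = q at *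
  generalize (n - (m - 1)) % (l - 1) = r at *
  refine ⟨q, r, hr, ?_, ?_⟩
  · zify [h.le, hm, show 1 ≤ l by omega] at hdm
    linarith
  · have hm2 := two_mul_choose_two_eq (m - 1)
    have hl2 := two_mul_choose_two_eq (l - 1)
    have hr2 := two_mul_choose_two_eq r
    push_cast [Nat.cast_sub hm, Nat.cast_sub (show 1 ≤ l by omega)] at hm2 hl2 ⊢
    linear_combination hm2 + q * hl2 + hr2

lemma two_mul_brkt3_le {n m l : ℕ} (hl : 2 ≤ l) (hlm : l ≤ m) :
    2 * (brkt3 n m l : ℤ) ≤ (m - 1) * (m - 2) + (n - (m - 1)) * (l - 2) := by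
  by_cases h : n ≤ m - 1
  -- chord bound: `(m-1)(m-2) - n(n-1) = (m-1-n)(m-2+n)` and `m - 2 + n ≥ l - 2`
  · rw [brkt3, if_pos h, two_mul_choose_two_eq]
    have hnm : (n : ℤ) ≤ m - 1 := by omega
    nlinarith
  · obtain ⟨q, r, hr, hn, heq⟩ := two_mul_brkt3_eq_of_lt hl (by omega) (not_le.mp h)
    have hr' : (r : ℤ) ≤ l - 2 := by omega
    rw [heq, hn]
    nlinarith

lemma le_two_mul_brkt3 {n m l : ℕ} (hl : 2 ≤ l) (hm : 1 ≤ m) (h : m - 1 < n) :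
    (m - 1) * (m - 2) + (n - (m - 1)) * (l - 2) - (l - 2) ^ 2 ≤ 2 * (brkt3 n m l : ℤ) := by
  obtain ⟨q, r, hr, hn, heq⟩ := two_mul_brkt3_eq_of_lt hl hm h
  have hr' : (r : ℤ) ≤ l - 2 := by omega
  have hr2 : 0 ≤ (r : ℤ) * (r - 1) := by rw [← two_mul_choose_two_eq]; positivity
  rw [heq, hn]
  nlinarith

lemma two_mul_brkt2_eq {n m : ℕ} (hm : 2 ≤ m) (hn : m / 2 ≤ n) :
    2 * (brkt2 n m : ℤ) = ((m / 2 : ℕ) - 1) * (2 * n - (m / 2 : ℕ)) := by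
  rw [brkt2, show (m - 2) / 2 = m / 2 - 1 by omega]
  have hs : 1 ≤ m / 2 := by omega
  generalize m / 2 = s at *
  have hs2 := two_mul_choose_two_eq (s - 1)
  push_cast [Nat.cast_sub hs, Nat.cast_sub hn] at hs2 ⊢
  linear_combination hs2

lemma eight_mul_brkt2_le {n m : ℕ} (hm : 2 ≤ m) (hmn : m ≤ 2 * n + 1) :
    8 * (brkt2 n m : ℤ) ≤ (m - 2) * (4 * n - m) := by
  have h := two_mul_brkt2_eq hm (show m / 2 ≤ n by omega)
  have hs : (m : ℤ) ≤ 2 * (m / 2 : ℕ) + 1 := by omega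
  have hs' : 2 * ((m / 2 : ℕ) : ℤ) ≤ m := by omega
  nlinarith [mul_nonneg (sub_nonneg.mpr hs')
    (show (0 : ℤ) ≤ 4 * n + 2 - 2 * (m / 2 : ℕ) - m by omega)]

lemma le_eight_mul_brkt2 {n m : ℕ} (hm : 2 ≤ m) (hmn : m ≤ 2 * n + 1) :
    (m - 3) * (4 * n - m + 1) ≤ 8 * (brkt2 n m : ℤ) := by
  have h := two_mul_brkt2_eq hm (show m / 2 ≤ n by omega)
  have hs : (m : ℤ) ≤ 2 * (m / 2 : ℕ) + 1 := by omega
  have hs' : 2 * ((m / 2 : ℕ) : ℤ) ≤ m := by omega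
  nlinarith [mul_nonneg (show (0 : ℤ) ≤ 2 * (m / 2 : ℕ) + 1 - m by omega)
    (show (0 : ℤ) ≤ 4 * n + 3 - 2 * (m / 2 : ℕ) - m by omega)]

lemma brkt3_add_brkt2_lt_brkt3 {k1 k2 l n1 n2 : ℕ} (hl : 2 ≤ l) (hlk : l ≤ k2) (hn1 : k1 ≤ n1)
    (hn2 : k2 + l ≤ n2) (hn2' : n2 ≤ 2 * k1 + l) :
    brkt3 n1 (k1 + l) l + brkt2 n2 (k2 + l) < brkt3 (n1 + n2) (k1 + k2 + l) l := by
  have h1 := two_mul_brkt3_le (n := n1) hl (show l ≤ k1 + l by omega)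
  have h2 := eight_mul_brkt2_le (n := n2) (show 2 ≤ k2 + l by omega) (by omega)
  have h3 := le_two_mul_brkt3 (n := n1 + n2) hl (show 1 ≤ k1 + k2 + l by omega) (by omega)
  push_cast at h1 h2 h3
  have hk : (0 : ℤ) ≤ k2 * (2 * k1 + l - n2) := mul_nonneg (by positivity) (by omega)
  have hkl : (l : ℤ) * l ≤ k2 * k2 := by gcongr
  zify
  nlinarith

lemma brkt3_add_brkt2_lt_brkt2 {k1 k2 l n1 n2 : ℕ} (hk1 : 2 ≤ k1) (hl : 2 ≤ l) (hlk : l ≤ k2)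
    (hn1 : k1 ≤ n1) (hn2 : k2 + l ≤ n2) (hn2' : 2 * k1 + l < n2) :
    brkt3 n1 (k1 + l) l + brkt2 n2 (k2 + l) < brkt2 (n1 + n2) (k1 + k2 + l) := by
  have h1 := two_mul_brkt3_le (n := n1) hl (show l ≤ k1 + l by omega)
  have h2 := eight_mul_brkt2_le (n := n2) (show 2 ≤ k2 + l by omega) (by omega)
  have h3 := le_eight_mul_brkt2 (n := n1 + n2) (show 2 ≤ k1 + k2 + l by omega) (by omega)
  push_cast at h1 h2 h3
  have hx : (0 : ℤ) ≤ (n1 - k1) * (k1 + k2 - 1) := mul_nonneg (by omega) (by omega)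
  have hy : (0 : ℤ) ≤ (n2 - 2 * k1 - l - 1) * (k1 - 1) := mul_nonneg (by omega) (by omega)
  have hz : (0 : ℤ) ≤ (k1 + 1) * (k2 - l) := mul_nonneg (by omega) (by omega)
  have hk : (2 : ℤ) * 2 ≤ k1 * k1 := by gcongr <;> omega
  zify
  nlinarith

theorem statement19_general (k1 k2 km n1 n2 : ℕ) (h12 : k2 ≤ k1) (h2m : km ≤ k2) (h3 : 3 ≤ km)
    (hn1 : k1 ≤ n1) (hn2 : k2 + km ≤ n2) :
    brkt3 n1 (k1 + km) km + brkt2 n2 (k2 + km) <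
      max (brkt3 (n1 + n2) (k1 + k2 + km) km) (brkt2 (n1 + n2) (k1 + k2 + km)) := by
  rcases le_or_gt n2 (2 * k1 + km) with h | h
  · exact lt_max_of_lt_left (brkt3_add_brkt2_lt_brkt3 (by omega) h2m hn1 hn2 h)
  · exact lt_max_of_lt_right
      (brkt3_add_brkt2_lt_brkt2 (by omega) (by omega) h2m hn1 hn2 h)

theorem statement19 (k1 k2 km n1 n2 : ℕ) (h12 : k2 ≤ k1) (h2m : km ≤ k2) (h3 : 3 ≤ km)
    (hodd : (if Odd k1 then 1 else 0) + (if Odd k2 then 1 else 0) +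
        (if Odd km then 1 else 0) ≤ 1)
    (hn1 : k1 ≤ n1) (hn2 : k2 + km ≤ n2) :
    brkt3 n1 (k1 + km) km + brkt2 n2 (k2 + km) <
      max (brkt3 (n1 + n2) (k1 + k2 + km) km) (brkt2 (n1 + n2) (k1 + k2 + km)) :=
  statement19_general k1 k2 km n1 n2 h12 h2m h3 hn1 hn2
end
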